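/- The initial and terminal colour sets of a tangle machine, indexed so that for each i the register s_i is the terminal register of the open process whose initial register is r_i, are stable machine invariants: if two machines are stably equivalent, then there is a bijection between their open processes and rack automorphisms on connected components carrying the indexed initial and terminal colours of one machine to those of the other. -/

import Mathlib

/-! ### Racks and quandles -/

/-- A rack structure on a set `Q`: a binary operation `act` (written `x ▷ y` in the paper)
such that `· ▷ z` is an automorphism of `(Q, ▷)` for every `z`, with inverse operation
`inv` (written `◁`). -/
structure RackStr (Q : Type) where
  act : Q → Q → Q
  inv : Q → Q → Q
  act_inv : ∀ x y, inv (act x y) y = x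
  inv_act : ∀ x y, act (inv x y) y = x
  self_distrib : ∀ x y z, act (act x y) z = act (act x z) (act y z)

/-- A quandle is a rack all of whose elements are idempotent. -/
def RackStr.IsQuandle {Q : Type} (R : RackStr Q) : Prop :=
  ∀ x, R.act x x = x

/-- An automorphism of a rack. -/
structure RackAut {Q : Type} (R : RackStr Q) where
  toEquiv : Q ≃ Q
  map_act : ∀ x y, toEquiv (R.act x y) = R.act (toEquiv x) (toEquiv y)

/-- A homomorphism of racks. -/
structure RackHom {Q₁ Q₂ : Type} (R₁ : RackStr Q₁) (R₂ : RackStr Q₂) where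
  toFun : Q₁ → Q₂
  map_act : ∀ x y, toFun (R₁.act x y) = R₂.act (toFun x) (toFun y)
  map_inv : ∀ x y, toFun (R₁.inv x y) = R₂.inv (toFun x) (toFun y)

/-- An isomorphism of racks. -/
structure RackIso {Q₁ Q₂ : Type} (R₁ : RackStr Q₁) (R₂ : RackStr Q₂) where
  toEquiv : Q₁ ≃ Q₂
  map_act : ∀ x y, toEquiv (R₁.act x y) = R₂.act (toEquiv x) (toEquiv y)
  map_inv : ∀ x y, toEquiv (R₁.inv x y) = R₂.inv (toEquiv x) (toEquiv y)

/-! ### Underlying graphs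

The underlying graph of a tangle machine is a finite directed graph in which every vertex
has in-degree at most one and out-degree at most one, i.e. a disjoint union of directed
path graphs (open processes) and directed cycles (closed processes). -/

structure TMGraph where
  V : Type
  E : Type
  fV : Fintype V
  fE : Fintype E
  dV : DecidableEq V
  dE : DecidableEq E
  src : E → V
  tgt : E → V
  src_inj : Function.Injective src
  tgt_inj : Function.Injective tgt

attribute [instance] TMGraph.fV TMGraph.fE TMGraph.dV TMGraph.dE

/-- Two registers are adjacent if some edge joins them (in either direction). -/
def TMGraph.adj (G : TMGraph) (v w : G.V) : Prop :=
  ∃ e, (G.src e = v ∧ G.tgt e = w) ∨ (G.src e = w ∧ G.tgt e = v)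

/-- Two registers are connected if they lie in the same process. -/
def TMGraph.conn (G : TMGraph) : G.V → G.V → Prop := Relation.EqvGen G.adj

def TMGraph.compSetoid (G : TMGraph) : Setoid G.V :=
  ⟨G.conn, Relation.EqvGen.is_equivalence _⟩

/-- The set of processes (connected components) of the underlying graph. -/
def TMGraph.Comp (G : TMGraph) : Type := Quotient G.compSetoid

/-- The process containing a given register. -/
def TMGraph.compOf (G : TMGraph) (v : G.V) : G.Comp := Quotient.mk G.compSetoid v

/-- An initial register of an open process: no edge enters it. -/
def TMGraph.Initial (G : TMGraph) (v : G.V) : Prop := ∀ e, G.tgt e ≠ v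

/-- A terminal register of an open process: no edge leaves it. -/
def TMGraph.Terminal (G : TMGraph) (v : G.V) : Prop := ∀ e, G.src e ≠ v

/-- A `2`-valent vertex: some edge enters it and some edge leaves it. -/
def TMGraph.TwoValent (G : TMGraph) (v : G.V) : Prop :=
  (∃ e, G.tgt e = v) ∧ (∃ e, G.src e = v)

/-- Contraction of a (non-loop) edge `e0` of `G`: the edge `e0` is removed and its
target is identified with its source. -/
def TMGraph.contract (G : TMGraph) (e0 : G.E) (hne : G.src e0 ≠ G.tgt e0) : TMGraph where
  V := {v : G.V // v ≠ G.tgt e0}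
  E := {e : G.E // e ≠ e0}
  fV := inferInstance
  fE := inferInstance
  dV := inferInstance
  dE := inferInstance
  src := fun e => if h : G.src e.1 = G.tgt e0 then ⟨G.src e0, hne⟩ else ⟨G.src e.1, h⟩
  tgt := fun e => ⟨G.tgt e.1, fun h => e.2 (G.tgt_inj h)⟩
  src_inj := by
    rintro ⟨e1, h1⟩ ⟨e2, h2⟩ h
    have h' : (if ha : G.src e1 = G.tgt e0 then (⟨G.src e0, hne⟩ : {v : G.V // v ≠ G.tgt e0})
          else ⟨G.src e1, ha⟩) =
        (if hb : G.src e2 = G.tgt e0 then (⟨G.src e0, hne⟩ : {v : G.V // v ≠ G.tgt e0})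
          else ⟨G.src e2, hb⟩) := h
    simp only [Subtype.mk.injEq]
    by_cases ha : G.src e1 = G.tgt e0 <;> by_cases hb : G.src e2 = G.tgt e0
    · exact G.src_inj (ha.trans hb.symm)
    · rw [dif_pos ha, dif_neg hb] at h'
      exact absurd (G.src_inj (congrArg Subtype.val h')).symm h2
    · rw [dif_neg ha, dif_pos hb] at h'
      exact absurd (G.src_inj (congrArg Subtype.val h')) h1
    · rw [dif_neg ha, dif_neg hb] at h'
      exact G.src_inj (congrArg Subtype.val h')
  tgt_inj := by
    rintro ⟨e1, h1⟩ ⟨e2, h2⟩ h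
    simp only [Subtype.mk.injEq] at h ⊢
    exact G.tgt_inj h

/-- An isomorphism of underlying graphs. -/
structure GraphIso (G H : TMGraph) where
  vEquiv : G.V ≃ H.V
  eEquiv : G.E ≃ H.E
  src_map : ∀ e, H.src (eEquiv e) = vEquiv (G.src e)
  tgt_map : ∀ e, H.tgt (eEquiv e) = vEquiv (G.tgt e)

/-! ### Tangle machines -/

/-- A tangle machine over a rack `(Q, R)` with underlying graph `G`: a partially defined
interaction function `φ` assigning to an edge its agent register and sign, and a colouring
`ρ` of the registers by `Q`, compatible with the interactions. -/
structure Machine (Q : Type) (R : RackStr Q) (G : TMGraph) where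
  φ : G.E → Option (G.V × Bool)
  ρ : G.V → Q
  compat : ∀ e, match φ e with
    | some (r, true) => ρ (G.tgt e) = R.act (ρ (G.src e)) (ρ r)
    | some (r, false) => ρ (G.tgt e) = R.inv (ρ (G.src e)) (ρ r)
    | none => ρ (G.tgt e) = ρ (G.src e)

variable {Q : Type} {R : RackStr Q} {G : TMGraph}

/-- A register is an agent if it operates on some edge. -/
def Machine.IsAgent (M : Machine Q R G) (r : G.V) : Prop :=
  ∃ e p, M.φ e = some p ∧ p.1 = r

/-! ### Reidemeister moves -/

/-- Applying rack automorphisms of `Q` to the colourings of the connected components. -/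
def RecolourMove (M M' : Machine Q R G) : Prop :=
  M'.φ = M.φ ∧ ∃ ψ : G.Comp → RackAut R, ∀ v, M'.ρ v = (ψ (G.compOf v)).toEquiv (M.ρ v)

def R2Half (M M' : Machine Q R G) (e1 e2 : G.E) : Prop :=
  ∃ (r : G.V) (s : Bool), M.φ e1 = none ∧ M.φ e2 = none ∧
    M'.φ e1 = some (r, s) ∧ M'.φ e2 = some (r, !s)

/-- The Reidemeister II move: on two consecutive edges, a pair of interactions by the same
agent with opposite signs is created or cancelled. -/
def R2Move (M M' : Machine Q R G) : Prop :=
  ∃ e1 e2, G.tgt e1 = G.src e2 ∧ (R2Half M M' e1 e2 ∨ R2Half M' M e1 e2) ∧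
    (∀ e, e ≠ e1 → e ≠ e2 → M'.φ e = M.φ e) ∧
    (∀ v, v ≠ G.tgt e1 → M'.ρ v = M.ρ v)

/-- The Reidemeister III move: the strand through `f` is coloured `y` (source) and
`y ▷ z` (target), `rz` is the register coloured `z`; each strand of the move consists of
two consecutive edges, operated on first by `rz` then by the register coloured `y ▷ z`
on one side, and first by the register coloured `y` then by `rz` on the other side. -/
def R3Move (M M' : Machine Q R G) : Prop :=
  ∃ (f : G.E) (rz : G.V) (strands : Finset (G.E × G.E)),
    M.φ f = some (rz, true) ∧ M'.φ f = some (rz, true) ∧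
    (∀ p ∈ strands, G.tgt p.1 = G.src p.2 ∧
      M.φ p.1 = some (rz, true) ∧ M.φ p.2 = some (G.tgt f, true) ∧
      M'.φ p.1 = some (G.src f, true) ∧ M'.φ p.2 = some (rz, true)) ∧
    (∀ e, (∀ p ∈ strands, e ≠ p.1 ∧ e ≠ p.2) → M'.φ e = M.φ e) ∧
    (∀ v, (∀ p ∈ strands, v ≠ G.tgt p.1) → M'.ρ v = M.ρ v)

def R1Half (M M' : Machine Q R G) (e : G.E) : Prop :=
  ∃ s : Bool, M.φ e = none ∧
    (M'.φ e = some (G.src e, s) ∨ M'.φ e = some (G.tgt e, s))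

/-- The Reidemeister I move (valid for quandle machines): an edge operated on by its own
register is created or deleted. -/
def R1Move (M M' : Machine Q R G) : Prop :=
  ∃ e, (R1Half M M' e ∨ R1Half M' M e) ∧
    (∀ e', e' ≠ e → M'.φ e' = M.φ e') ∧ M'.ρ = M.ρ

/-- A single move on machines over a fixed underlying graph.  The flag `b` records
whether the move R1 (valid only for quandle machines) is admitted. -/
def Move (b : Bool) (M M' : Machine Q R G) : Prop :=
  RecolourMove M M' ∨ R2Move M M' ∨ R3Move M M' ∨
    (b = true ∧ R.IsQuandle ∧ R1Move M M')

/-- Equivalence of machines over a fixed underlying graph: generated by rack automorphisms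
of the colourings of connected components and the Reidemeister moves R2 and R3 (and also
R1, when `b = true` and the rack is a quandle). -/
def MEquiv (b : Bool) : Machine Q R G → Machine Q R G → Prop :=
  Relation.EqvGen (Move b)

/-! ### Stabilization, and machines up to graph isomorphism -/

/-- A machine bundled with its underlying graph. -/
structure BMachine (Q : Type) (R : RackStr Q) where
  G : TMGraph
  m : Machine Q R G

/-- An isomorphism (relabelling) of machines. -/
def MachineIso (M M' : BMachine Q R) : Prop :=
  ∃ i : GraphIso M.G M'.G,
    (∀ v, M'.m.ρ (i.vEquiv v) = M.m.ρ v) ∧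
    (∀ e, M'.m.φ (i.eEquiv e) = (M.m.φ e).map (fun p => (i.vEquiv p.1, p.2)))

/-- Contraction of an edge `e0` outside the domain of `φ`: the destabilized machine. -/
def Machine.destab (M : Machine Q R G) (e0 : G.E) (h0 : M.φ e0 = none)
    (hne : G.src e0 ≠ G.tgt e0) : Machine Q R (G.contract e0 hne) where
  φ := fun e => (M.φ e.1).map fun p =>
    (if hp : p.1 = G.tgt e0 then ⟨G.src e0, hne⟩ else ⟨p.1, hp⟩, p.2)
  ρ := fun v => M.ρ v.1
  compat := by
    have hst : M.ρ (G.tgt e0) = M.ρ (G.src e0) := by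
      have h := M.compat e0
      rw [h0] at h
      exact h
    have key : ∀ r : G.V,
        M.ρ ((if hp : r = G.tgt e0 then (⟨G.src e0, hne⟩ : {v : G.V // v ≠ G.tgt e0})
          else ⟨r, hp⟩) : {v : G.V // v ≠ G.tgt e0}).1 = M.ρ r := by
      intro r
      by_cases hp : r = G.tgt e0
      · rw [dif_pos hp, hp]
        exact hst.symm
      · rw [dif_neg hp]
    rintro ⟨e, he⟩
    have h := M.compat e
    cases h1 : M.φ e with
    | none =>
      rw [h1] at h
      show M.ρ (G.tgt e) =
        M.ρ ((if hs : G.src e = G.tgt e0 then (⟨G.src e0, hne⟩ : {v : G.V // v ≠ G.tgt e0})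
          else ⟨G.src e, hs⟩) : {v : G.V // v ≠ G.tgt e0}).1
      rw [key (G.src e)]
      exact h
    | some p =>
      obtain ⟨r, s⟩ := p
      rw [h1] at h
      cases s with
      | true =>
        show M.ρ (G.tgt e) =
          R.act (M.ρ ((if hs : G.src e = G.tgt e0 then
              (⟨G.src e0, hne⟩ : {v : G.V // v ≠ G.tgt e0}) else ⟨G.src e, hs⟩) :
              {v : G.V // v ≠ G.tgt e0}).1)
            (M.ρ ((if hp : r = G.tgt e0 then
              (⟨G.src e0, hne⟩ : {v : G.V // v ≠ G.tgt e0}) else ⟨r, hp⟩) :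
              {v : G.V // v ≠ G.tgt e0}).1)
        rw [key (G.src e), key r]
        exact h
      | false =>
        show M.ρ (G.tgt e) =
          R.inv (M.ρ ((if hs : G.src e = G.tgt e0 then
              (⟨G.src e0, hne⟩ : {v : G.V // v ≠ G.tgt e0}) else ⟨G.src e, hs⟩) :
              {v : G.V // v ≠ G.tgt e0}).1)
            (M.ρ ((if hp : r = G.tgt e0 then
              (⟨G.src e0, hne⟩ : {v : G.V // v ≠ G.tgt e0}) else ⟨r, hp⟩) :
              {v : G.V // v ≠ G.tgt e0}).1)
        rw [key (G.src e), key r]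
        exact h

/-- A single step of equivalence of bundled machines (no stabilization). -/
inductive EStep (b : Bool) : BMachine Q R → BMachine Q R → Prop
  | move {G : TMGraph} {M M' : Machine Q R G} :
      Move b M M' → EStep b ⟨G, M⟩ ⟨G, M'⟩
  | iso {M M' : BMachine Q R} : MachineIso M M' → EStep b M M'

/-- A single step of stable equivalence of bundled machines: a Reidemeister move, an
isomorphism, or a (de)stabilization, i.e. contraction of an edge outside the domain of
`φ` at least one of whose endpoint registers lies outside the image of `φ`. -/
inductive SStep (b : Bool) : BMachine Q R → BMachine Q R → Prop
  | move {G : TMGraph} {M M' : Machine Q R G} :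
      Move b M M' → SStep b ⟨G, M⟩ ⟨G, M'⟩
  | iso {M M' : BMachine Q R} : MachineIso M M' → SStep b M M'
  | destab {G : TMGraph} (M : Machine Q R G) (e0 : G.E) (h0 : M.φ e0 = none)
      (hne : G.src e0 ≠ G.tgt e0)
      (hout : ¬ M.IsAgent (G.src e0) ∨ ¬ M.IsAgent (G.tgt e0)) :
      SStep b ⟨G, M⟩ ⟨G.contract e0 hne, M.destab e0 h0 hne⟩

/-- Equivalence of machines. -/
def EquivB (b : Bool) : BMachine Q R → BMachine Q R → Prop :=
  Relation.EqvGen (EStep b)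

/-- Stable equivalence of machines. -/
def StabEquivB (b : Bool) : BMachine Q R → BMachine Q R → Prop :=
  Relation.EqvGen (SStep b)

/-! ### Interactions: trivial and unit interactions -/

/-- The interaction with agent `r` is trivial if the machine is equivalent to one in which
`r` has no patients. -/
def Machine.TrivialAt (M : Machine Q R G) (r : G.V) : Prop :=
  ∃ M' : Machine Q R G, MEquiv true M M' ∧ ∀ e p, M'.φ e = some p → p.1 ≠ r

/-- The interaction with agent `r` is unit if the machine is equivalent to one in which all
patients of `r` share the same colour as `r`. -/
def Machine.UnitAt (M : Machine Q R G) (r : G.V) : Prop :=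
  ∃ M' : Machine Q R G, MEquiv true M M' ∧ ∀ e p, M'.φ e = some p → p.1 = r →
    M'.ρ (G.src e) = M'.ρ r ∧ M'.ρ (G.tgt e) = M'.ρ r

/-- The nontrivial interaction number of a machine. -/
noncomputable def Machine.nontrivialNum (M : Machine Q R G) : ℕ :=
  Nat.card {r : G.V // ¬ M.TrivialAt r}

/-- The nonunit interaction number of a machine. -/
noncomputable def Machine.nonunitNum (M : Machine Q R G) : ℕ :=
  Nat.card {r : G.V // ¬ M.UnitAt r}

/-! ### Connect sums and factorizations -/

/-- `M` is the connect sum of the machines in the list `l` (all over the same underlying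
graph, with the same colouring, and with pairwise disjoint interaction domains). -/
def IsConnectSumList (M : Machine Q R G) (l : List (Machine Q R G)) : Prop :=
  (∀ N ∈ l, N.ρ = M.ρ) ∧
  l.Pairwise (fun N N' => ∀ e, N.φ e ≠ none → N'.φ e = none) ∧
  (∀ N ∈ l, ∀ e, N.φ e ≠ none → N.φ e = M.φ e) ∧
  (∀ e, M.φ e ≠ none → ∃ N ∈ l, N.φ e = M.φ e) ∧
  (∀ e, M.φ e = none → ∀ N ∈ l, N.φ e = none)

/-- `M` is the connect sum `M₁ # M₂`. -/
def IsConnectSum2 (M M₁ M₂ : Machine Q R G) : Prop :=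
  IsConnectSumList M [M₁, M₂]

/-- A factorization of `M`: a machine equivalent to `M` is a connect sum of the machines
in the list `l`. -/
def IsFactorizationL (M : Machine Q R G) (l : List (Machine Q R G)) : Prop :=
  ∃ M' : Machine Q R G, MEquiv true M M' ∧ IsConnectSumList M' l

/-- A unit machine: all of its interactions are trivial. -/
def Machine.IsUnitMachine (M : Machine Q R G) : Prop :=
  ∀ r, M.TrivialAt r

/-- A prime machine: not a unit, and in any two-factor factorization one factor is a unit. -/
def Machine.IsPrime (M : Machine Q R G) : Prop :=
  ¬ M.IsUnitMachine ∧
  ∀ M₁ M₂ : Machine Q R G, IsFactorizationL M [M₁, M₂] →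
    M₁.IsUnitMachine ∨ M₂.IsUnitMachine

/-- The complexity of a machine: the maximal number of prime factors of a factorization. -/
noncomputable def Machine.complexity (M : Machine Q R G) : ℕ :=
  sSup {k | ∃ l : List (Machine Q R G), l.length = k ∧ IsFactorizationL M l ∧
    ∀ N ∈ l, N.IsPrime}

/-- `N'` refines `N`: `N'` is obtained from `N` by factorizing one of its factors into two. -/
def Refines (N' N : List (Machine Q R G)) : Prop :=
  ∃ (Ni A B : Machine Q R G) (rest : List (Machine Q R G)),
    N.Perm (Ni :: rest) ∧ N'.Perm (A :: B :: rest) ∧ IsFactorizationL Ni [A, B]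

/-- Refinement into two non-unit factors. -/
def NURefines (N' N : List (Machine Q R G)) : Prop :=
  ∃ (Ni A B : Machine Q R G) (rest : List (Machine Q R G)),
    N.Perm (Ni :: rest) ∧ N'.Perm (A :: B :: rest) ∧ IsFactorizationL Ni [A, B] ∧
    ¬ A.IsUnitMachine ∧ ¬ B.IsUnitMachine

/-- Topological equivalence of factorizations: generated by refinements into non-unit
factors and their inverses. -/
def TopEquiv : List (Machine Q R G) → List (Machine Q R G) → Prop :=
  Relation.EqvGen NURefines

/-- A split machine: it is a disjoint union of two nonempty machines with no interactions
between them. -/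
def Machine.IsSplit (M : Machine Q R G) : Prop :=
  ∃ S : Set G.V, S.Nonempty ∧ Sᶜ.Nonempty ∧
    (∀ e, (G.src e ∈ S ↔ G.tgt e ∈ S)) ∧
    (∀ e p, M.φ e = some p → (G.src e ∈ S ↔ p.1 ∈ S))

/-! ### Linking numbers -/

/-- The linking number of register `r` with process `c`: the number of positive edges
in `c` operated on by `r` minus the number of negative ones. -/
noncomputable def Machine.linkNum (M : Machine Q R G) (r : G.V) (c : G.Comp) : ℤ :=
  (Nat.card {e : G.E // M.φ e = some (r, true) ∧ G.compOf (G.src e) = c} : ℤ) -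
  (Nat.card {e : G.E // M.φ e = some (r, false) ∧ G.compOf (G.src e) = c} : ℤ)

/-- The unframed linking number: diagonal entries are set to zero. -/
noncomputable def Machine.linkNum₀ (M : Machine Q R G) (r : G.V) (c : G.Comp) : ℤ :=
  letI := Classical.dec (c = G.compOf r)
  if c = G.compOf r then 0 else M.linkNum r c

/-! ### Labelled graphs and reduced (linking) graphs -/

/-- A graph together with a labelling of each vertex by a vector indexed by `P`. -/
structure LGraph where
  G : TMGraph
  P : Type
  lab : G.V → P → ℤ

/-- An isomorphism of labelled graphs. -/
structure LGraphIso (L L' : LGraph) where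
  toGraphIso : GraphIso L.G L'.G
  pEquiv : L.P ≃ L'.P
  lab_map : ∀ v p, L'.lab (toGraphIso.vEquiv v) (pEquiv p) = L.lab v p

/-- Contraction of the edge `e0` in a labelled graph; the surviving merged vertex keeps the
label of the target of `e0` if `keepTgt = true`, and of the source otherwise. -/
def LGraph.contractMerge (L : LGraph) (e0 : L.G.E) (hne : L.G.src e0 ≠ L.G.tgt e0)
    (keepTgt : Bool) : LGraph where
  G := L.G.contract e0 hne
  P := L.P
  lab := fun v p => if keepTgt = true ∧ v.1 = L.G.src e0 then L.lab (L.G.tgt e0) p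
    else L.lab v.1 p

/-- A reduction step on labelled graphs: contraction of an edge incident to a `2`-valent
vertex all of whose label entries vanish, removing that vertex. -/
def ReduceStep (L L' : LGraph) : Prop :=
  ∃ (e0 : L.G.E) (hne : L.G.src e0 ≠ L.G.tgt e0),
    (L.G.TwoValent (L.G.tgt e0) ∧ (∀ p, L.lab (L.G.tgt e0) p = 0) ∧
      Nonempty (LGraphIso L' (L.contractMerge e0 hne false))) ∨
    (L.G.TwoValent (L.G.src e0) ∧ (∀ p, L.lab (L.G.src e0) p = 0) ∧
      Nonempty (LGraphIso L' (L.contractMerge e0 hne true)))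

/-- `L'` is the (fully) reduced labelled graph of `L`. -/
def IsReductionOf (L' L : LGraph) : Prop :=
  Relation.ReflTransGen ReduceStep L L' ∧ ∀ L'', ¬ ReduceStep L' L''

/-- A graph viewed as a labelled graph with empty label vectors. -/
def zeroLGraph (G : TMGraph) : LGraph := ⟨G, PEmpty, fun _ _ => 0⟩

/-- The linking graph of a machine: its underlying graph, labelled by linking vectors. -/
noncomputable def linkLGraph (M : BMachine Q R) : LGraph :=
  ⟨M.G, M.G.Comp, fun v c => M.m.linkNum v c⟩

/-- The unframed linking graph of a machine. -/
noncomputable def linkLGraph₀ (M : BMachine Q R) : LGraph :=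
  ⟨M.G, M.G.Comp, fun v c => M.m.linkNum₀ v c⟩

/-! ### The fundamental rack -/

/-- Formal rack terms in generators `V`. -/
inductive RTerm (V : Type) : Type
  | gen : V → RTerm V
  | act : RTerm V → RTerm V → RTerm V
  | inv : RTerm V → RTerm V → RTerm V

def RTerm.map {α β : Type} (f : α → β) : RTerm α → RTerm β
  | .gen v => .gen (f v)
  | .act x y => .act (x.map f) (y.map f)
  | .inv x y => .inv (x.map f) (y.map f)

/-- The congruence on rack terms generated by the rack axioms together with the
relations `Rel`. -/
inductive PCong {V : Type} (Rel : RTerm V → RTerm V → Prop) :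
    RTerm V → RTerm V → Prop
  | of {x y} : Rel x y → PCong Rel x y
  | refl (x) : PCong Rel x x
  | symm {x y} : PCong Rel x y → PCong Rel y x
  | trans {x y z} : PCong Rel x y → PCong Rel y z → PCong Rel x z
  | act_congr {x x' y y'} : PCong Rel x x' → PCong Rel y y' →
      PCong Rel (.act x y) (.act x' y')
  | inv_congr {x x' y y'} : PCong Rel x x' → PCong Rel y y' →
      PCong Rel (.inv x y) (.inv x' y')
  | act_inv (x y) : PCong Rel (.inv (.act x y) y) x
  | inv_act (x y) : PCong Rel (.act (.inv x y) y) x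
  | distrib (x y z) : PCong Rel (.act (.act x y) z) (.act (.act x z) (.act y z))

def pcongSetoid {V : Type} (Rel : RTerm V → RTerm V → Prop) : Setoid (RTerm V) :=
  ⟨PCong Rel, ⟨PCong.refl, PCong.symm, PCong.trans⟩⟩

/-- The rack presented by generators `V` and relations `Rel`. -/
def PresentedRack (V : Type) (Rel : RTerm V → RTerm V → Prop) : Type :=
  Quotient (pcongSetoid Rel)

def presentedRackStr (V : Type) (Rel : RTerm V → RTerm V → Prop) :
    RackStr (PresentedRack V Rel) where
  act := Quotient.map₂ RTerm.act (fun _ _ h1 _ _ h2 => PCong.act_congr h1 h2)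
  inv := Quotient.map₂ RTerm.inv (fun _ _ h1 _ _ h2 => PCong.inv_congr h1 h2)
  act_inv := fun x y => Quotient.inductionOn₂ x y fun a b =>
    Quotient.sound (PCong.act_inv a b)
  inv_act := fun x y => Quotient.inductionOn₂ x y fun a b =>
    Quotient.sound (PCong.inv_act a b)
  self_distrib := fun x y z => Quotient.inductionOn₃ x y z fun a b c =>
    Quotient.sound (PCong.distrib a b c)

/-- The defining relations of the fundamental rack of a machine. -/
def machineRel (M : Machine Q R G) (a b : RTerm G.V) : Prop :=
  ∃ e, (M.φ e = none ∧ a = .gen (G.tgt e) ∧ b = .gen (G.src e)) ∨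
    (∃ r, M.φ e = some (r, true) ∧ a = .gen (G.tgt e) ∧
      b = .act (.gen (G.src e)) (.gen r)) ∨
    (∃ r, M.φ e = some (r, false) ∧ a = .gen (G.tgt e) ∧
      b = .inv (.gen (G.src e)) (.gen r))

/-- The fundamental rack of a machine. -/
def FundRack (M : Machine Q R G) : Type := PresentedRack G.V (machineRel M)

def fundRackStr (M : Machine Q R G) : RackStr (FundRack M) :=
  presentedRackStr G.V (machineRel M)

/-- The canonical colouring of a machine by its fundamental rack. -/
def fundColour (M : Machine Q R G) : G.V → FundRack M :=
  fun v => Quotient.mk (pcongSetoid (machineRel M)) (RTerm.gen v)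

/-- The relations of the free product of the fundamental racks of two machines on the
disjoint union of their generator sets. -/
def freeProdRel (M₁ M₂ : Machine Q R G) (a b : RTerm (G.V ⊕ G.V)) : Prop :=
  (∃ a' b', machineRel M₁ a' b' ∧ a = a'.map Sum.inl ∧ b = b'.map Sum.inl) ∨
  (∃ a' b', machineRel M₂ a' b' ∧ a = a'.map Sum.inr ∧ b = b'.map Sum.inr)

/-- The free product of the fundamental racks of two machines. -/
def FreeProdRack (M₁ M₂ : Machine Q R G) : Type :=
  PresentedRack (G.V ⊕ G.V) (freeProdRel M₁ M₂)

def freeProdRackStr (M₁ M₂ : Machine Q R G) : RackStr (FreeProdRack M₁ M₂) :=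
  presentedRackStr (G.V ⊕ G.V) (freeProdRel M₁ M₂)

/-! ### Shannon capacity -/

/-- Two colours can be confused if they both occur among the three colours (input colour,
agent colour, output colour) of a single interaction edge. -/
def Machine.Confusable (M : Machine Q R G) (a b : Q) : Prop :=
  ∃ e p, M.φ e = some p ∧
    (a = M.ρ (G.src e) ∨ a = M.ρ p.1 ∨ a = M.ρ (G.tgt e)) ∧
    (b = M.ρ (G.src e) ∨ b = M.ρ p.1 ∨ b = M.ρ (G.tgt e))

/-- Two messages are confusable if in each coordinate the entries are equal or confusable. -/
def Machine.MsgConfusable (M : Machine Q R G) {k : ℕ} (m₁ m₂ : Fin k → Q) : Prop :=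
  ∀ i, m₁ i = m₂ i ∨ M.Confusable (m₁ i) (m₂ i)

/-- A distinct set of messages: entries are colours of registers, and no two distinct
members can be confused. -/
def Machine.DistinctSet (M : Machine Q R G) {k : ℕ} (S : Set (Fin k → Q)) : Prop :=
  (∀ m ∈ S, ∀ i, m i ∈ Set.range M.ρ) ∧
  ∀ m₁ ∈ S, ∀ m₂ ∈ S, m₁ ≠ m₂ → ¬ M.MsgConfusable m₁ m₂

/-- The maximal number of pairwise distinct messages of length `k`. -/
noncomputable def Machine.capK (M : Machine Q R G) (k : ℕ) : ℕ :=
  sSup {n | ∃ S : Finset (Fin k → Q), M.DistinctSet (S : Set (Fin k → Q)) ∧ S.card = n}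

/-- The Shannon capacity of a machine. -/
noncomputable def Machine.shannonCapacity (M : Machine Q R G) : ℝ :=
  ⨆ k : ℕ, (M.capK (k + 1) : ℝ) ^ ((1 : ℝ) / (k + 1))

/-!
Every register has at most one outgoing and at most one incoming edge, so following outgoing
edges is deterministic: any two registers of a process flow into a common register. Hence a
process has at most one terminal register, and, by finiteness, the process of an initial
register has exactly one. A Reidemeister move changes colours only at 2-valent registers, up
to a rack automorphism per process; an isomorphism or a stabilization move matches the initial
registers bijectively and keeps the colours of initial and terminal registers. Matching the
two end colours of every open process by a rack automorphism is an equivalence relation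
(transitivity uses the terminal register of the intermediate process), so it holds for stably
equivalent machines.
-/

namespace RackAut

def refl (R : RackStr Q) : RackAut R := ⟨Equiv.refl Q, fun _ _ => rfl⟩

def symm (ψ : RackAut R) : RackAut R where
  toEquiv := ψ.toEquiv.symm
  map_act x y := ψ.toEquiv.injective <| by
    simp only [ψ.map_act, Equiv.apply_symm_apply]

def trans (ψ₁ ψ₂ : RackAut R) : RackAut R where
  toEquiv := ψ₁.toEquiv.trans ψ₂.toEquiv
  map_act x y := by simp only [Equiv.trans_apply, ψ₁.map_act, ψ₂.map_act]

end RackAut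

namespace TMGraph

def Step (G : TMGraph) (v w : G.V) : Prop := ∃ e, G.src e = v ∧ G.tgt e = w

theorem step_right_unique {u v w : G.V} (hv : G.Step u v) (hw : G.Step u w) : v = w := by
  obtain ⟨e, rfl, rfl⟩ := hv
  obtain ⟨e', he, rfl⟩ := hw
  rw [G.src_inj he]

theorem conn_of_edge (e : G.E) : G.conn (G.src e) (G.tgt e) :=
  .rel _ _ ⟨e, .inl ⟨rfl, rfl⟩⟩

theorem conn_join {v w : G.V} (h : G.conn v w) :
    Relation.Join (Relation.ReflTransGen G.Step) v w := by
  refine (Relation.equivalence_join_reflTransGen ?_).eqvGen_iff.mp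
    (Relation.EqvGen.mono ?_ _ _ h)
  · intro u v w hv hw
    obtain rfl := step_right_unique hv hw
    exact ⟨v, .refl, .refl⟩
  · rintro _ _ ⟨e, ⟨rfl, rfl⟩ | ⟨rfl, rfl⟩⟩
    · exact ⟨G.tgt e, .single ⟨e, rfl, rfl⟩, .refl⟩
    · exact ⟨G.tgt e, .refl, .single ⟨e, rfl, rfl⟩⟩

theorem Terminal.eq_of_reflTransGen {s u : G.V} (hs : G.Terminal s)
    (h : Relation.ReflTransGen G.Step s u) : u = s := by
  rcases h.cases_head with rfl | ⟨_, ⟨e, he, -⟩, -⟩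
  · rfl
  · exact absurd he (hs e)

theorem Terminal.eq_of_conn {s t : G.V} (hs : G.Terminal s) (ht : G.Terminal t)
    (h : G.conn s t) : s = t := by
  obtain ⟨u, hsu, htu⟩ := conn_join h
  exact (hs.eq_of_reflTransGen hsu).symm.trans (ht.eq_of_reflTransGen htu)

theorem Initial.exists_terminal_conn {v : G.V} (hv : G.Initial v) :
    ∃ t, G.Terminal t ∧ G.conn v t := by
  by_contra! hnone
  -- Otherwise following outgoing edges is an injective, hence surjective, self-map of the
  -- finite process of `v`, and some edge enters `v`.
  have hout : ∀ w : {w // G.conn v w}, ∃ e, G.src e = w := fun w => by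
    by_contra! hw
    exact hnone w hw w.2
  choose out hout using hout
  let next : {w // G.conn v w} → {w // G.conn v w} := fun w =>
    ⟨G.tgt (out w), .trans _ _ _ w.2 (hout w ▸ G.conn_of_edge (out w))⟩
  have hnext : next.Injective := fun a b hab => Subtype.ext <| by
    rw [← hout a, ← hout b, G.tgt_inj (congrArg Subtype.val hab)]
  obtain ⟨w, hw⟩ := Finite.injective_iff_surjective.mp hnext ⟨v, .refl v⟩
  exact hv (out w) (congrArg Subtype.val hw)

theorem Initial.not_twoValent {v : G.V} (hv : G.Initial v) : ¬ G.TwoValent v :=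
  fun ⟨⟨e, he⟩, _⟩ => hv e he

theorem Terminal.not_twoValent {v : G.V} (hv : G.Terminal v) : ¬ G.TwoValent v :=
  fun ⟨_, ⟨e, he⟩⟩ => hv e he

theorem conn_map {H : TMGraph} (f : G.V → H.V) (hf : ∀ v w, G.adj v w → H.conn (f v) (f w))
    {v w : G.V} (h : G.conn v w) : H.conn (f v) (f w) := by
  induction h with
  | rel _ _ hadj => exact hf _ _ hadj
  | refl => exact .refl _
  | symm _ _ _ ih => exact .symm _ _ ih
  | trans _ _ _ _ _ ih₁ ih₂ => exact .trans _ _ _ ih₁ ih₂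

section Contract

variable {e0 : G.E} {hne : G.src e0 ≠ G.tgt e0}

theorem contract_src_val (e : (G.contract e0 hne).E) :
    ((G.contract e0 hne).src e).1 = if G.src e.1 = G.tgt e0 then G.src e0 else G.src e.1 := by
  simp only [contract]
  split_ifs <;> rfl

theorem initial_contract_iff {v : (G.contract e0 hne).V} :
    (G.contract e0 hne).Initial v ↔ G.Initial v.1 := by
  refine ⟨fun h e he => ?_, fun h e he => h e.1 (congrArg Subtype.val he)⟩
  by_cases he0 : e = e0
  · exact v.2 (he0 ▸ he).symm
  · exact h ⟨e, he0⟩ (Subtype.ext he)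

theorem conn_of_contract_conn {v w : (G.contract e0 hne).V}
    (h : (G.contract e0 hne).conn v w) : G.conn v.1 w.1 := by
  have hedge (e : (G.contract e0 hne).E) :
      G.conn ((G.contract e0 hne).src e).1 ((G.contract e0 hne).tgt e).1 := by
    rw [contract_src_val]
    split_ifs with he
    · exact .trans _ _ _ (he ▸ G.conn_of_edge e0) (G.conn_of_edge e.1)
    · exact G.conn_of_edge e.1
  refine conn_map Subtype.val ?_ h
  rintro _ _ ⟨e, ⟨rfl, rfl⟩ | ⟨rfl, rfl⟩⟩
  · exact hedge e
  · exact .symm _ _ (hedge e)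

theorem exists_terminal_of_contract_terminal {s : (G.contract e0 hne).V}
    (hs : (G.contract e0 hne).Terminal s) :
    ∃ t, G.Terminal t ∧ (t = s.1 ∨ t = G.tgt e0 ∧ s.1 = G.src e0) := by
  by_cases h : s.1 = G.src e0
  · refine ⟨G.tgt e0, fun e he => ?_, .inr ⟨rfl, h⟩⟩
    by_cases he0 : e = e0
    · exact hne (he0 ▸ he)
    · exact hs ⟨e, he0⟩ (Subtype.ext <| (contract_src_val _).trans (by rw [if_pos he, h]))
  · refine ⟨s.1, fun e he => ?_, .inl rfl⟩
    by_cases he0 : e = e0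
    · exact h (he0 ▸ he).symm
    · have hne' : G.src e ≠ G.tgt e0 := he ▸ s.2
      exact hs ⟨e, he0⟩ (Subtype.ext <| (contract_src_val _).trans (by rw [if_neg hne', he]))

end Contract

end TMGraph

namespace GraphIso

variable {H : TMGraph} (i : GraphIso G H)

theorem initial_iff {v : G.V} : H.Initial (i.vEquiv v) ↔ G.Initial v := by
  simp only [TMGraph.Initial, ← i.eEquiv.forall_congr_right, i.tgt_map, ne_eq,
    EmbeddingLike.apply_eq_iff_eq]

theorem terminal_map {v : G.V} (h : G.Terminal v) : H.Terminal (i.vEquiv v) := by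
  simpa only [TMGraph.Terminal, ← i.eEquiv.forall_congr_right, i.src_map, ne_eq,
    EmbeddingLike.apply_eq_iff_eq] using h

theorem conn_map {v w : G.V} (h : G.conn v w) : H.conn (i.vEquiv v) (i.vEquiv w) := by
  refine TMGraph.conn_map i.vEquiv ?_ h
  rintro _ _ ⟨e, ⟨rfl, rfl⟩ | ⟨rfl, rfl⟩⟩
  · exact i.src_map e ▸ i.tgt_map e ▸ H.conn_of_edge _
  · exact .symm _ _ (i.src_map e ▸ i.tgt_map e ▸ H.conn_of_edge _)

end GraphIso

theorem Machine.ρ_tgt_eq_of_φ_eq_none (M : Machine Q R G) {e : G.E} (h : M.φ e = none) :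
    M.ρ (G.tgt e) = M.ρ (G.src e) := by
  simpa [h] using M.compat e

theorem Move.exists_ρ_eq_of_not_twoValent {b : Bool} {M M' : Machine Q R G} (h : Move b M M') :
    ∃ ψ : G.Comp → RackAut R, ∀ v, ¬ G.TwoValent v →
      M'.ρ v = (ψ (G.compOf v)).toEquiv (M.ρ v) := by
  have twoValent_tgt (e₁ e₂ : G.E) (h : G.tgt e₁ = G.src e₂) : G.TwoValent (G.tgt e₁) :=
    ⟨⟨e₁, rfl⟩, e₂, h.symm⟩
  rcases h with ⟨-, ψ, hψ⟩ | ⟨e₁, e₂, h₁₂, -, -, hρ⟩ | ⟨_, _, strands, -, -, hstr, -, hρ⟩ |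
    ⟨-, -, -, -, -, hρ⟩
  · exact ⟨ψ, fun v _ => hψ v⟩
  · refine ⟨fun _ => .refl R, fun v hv => hρ v ?_⟩
    rintro rfl
    exact hv (twoValent_tgt e₁ e₂ h₁₂)
  · refine ⟨fun _ => .refl R, fun v hv => hρ v fun p hp => ?_⟩
    rintro rfl
    exact hv (twoValent_tgt p.1 p.2 (hstr p hp).1)
  · exact ⟨fun _ => .refl R, fun v _ => congrFun hρ v⟩

def EndColoursMatch (M M' : BMachine Q R) (r : M.G.V) (r' : M'.G.V) (ψ : RackAut R) : Prop :=
  M'.m.ρ r' = ψ.toEquiv (M.m.ρ r) ∧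
    ∀ s s', M.G.Terminal s → M.G.conn r s → M'.G.Terminal s' → M'.G.conn r' s' →
      M'.m.ρ s' = ψ.toEquiv (M.m.ρ s)

def EndColoursEquiv (M M' : BMachine Q R) : Prop :=
  ∃ β : {v // M.G.Initial v} ≃ {v // M'.G.Initial v},
    ∀ r, ∃ ψ, EndColoursMatch M M' r.1 (β r).1 ψ

namespace EndColoursMatch

variable {M M' M'' : BMachine Q R} {r : M.G.V} {r' : M'.G.V} {r'' : M''.G.V}
  {ψ ψ' : RackAut R}

theorem of_map (f : M.G.V → M'.G.V) (hr : M'.m.ρ r' = ψ.toEquiv (M.m.ρ r))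
    (hmap : ∀ s, M.G.Terminal s → M.G.conn r s →
      M'.G.Terminal (f s) ∧ M'.G.conn r' (f s) ∧ M'.m.ρ (f s) = ψ.toEquiv (M.m.ρ s)) :
    EndColoursMatch M M' r r' ψ := by
  refine ⟨hr, fun s s' hs hrs hs' hrs' => ?_⟩
  obtain ⟨ht, hrt, hρ⟩ := hmap s hs hrs
  rwa [hs'.eq_of_conn ht (.trans _ _ _ (.symm _ _ hrs') hrt)]

theorem of_lift (hr : M'.m.ρ r' = ψ.toEquiv (M.m.ρ r))
    (hlift : ∀ s', M'.G.Terminal s' → M'.G.conn r' s' →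
      ∃ s, M.G.Terminal s ∧ M.G.conn r s ∧ M'.m.ρ s' = ψ.toEquiv (M.m.ρ s)) :
    EndColoursMatch M M' r r' ψ := by
  refine ⟨hr, fun s s' hs hrs hs' hrs' => ?_⟩
  obtain ⟨t, ht, hrt, hρ⟩ := hlift s' hs' hrs'
  rwa [← ht.eq_of_conn hs (.trans _ _ _ (.symm _ _ hrt) hrs)]

theorem symm (h : EndColoursMatch M M' r r' ψ) : EndColoursMatch M' M r' r ψ.symm := by
  obtain ⟨hr, hterm⟩ := h
  refine ⟨?_, fun s' s hs' hrs' hs hrs => ?_⟩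
  · exact (ψ.toEquiv.eq_symm_apply).mpr hr.symm
  · exact (ψ.toEquiv.eq_symm_apply).mpr (hterm s s' hs hrs hs' hrs').symm

theorem trans (h : EndColoursMatch M M' r r' ψ) (h' : EndColoursMatch M' M'' r' r'' ψ')
    (hr' : M'.G.Initial r') : EndColoursMatch M M'' r r'' (ψ.trans ψ') := by
  refine ⟨by rw [h'.1, h.1]; rfl, fun s s'' hs hrs hs'' hrs'' => ?_⟩
  obtain ⟨t, ht, hrt⟩ := hr'.exists_terminal_conn
  rw [h'.2 t s'' ht hrt hs'' hrs'', h.2 s t hs hrs ht hrt]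
  rfl

end EndColoursMatch

namespace EndColoursEquiv

theorem refl (M : BMachine Q R) : EndColoursEquiv M M :=
  ⟨.refl _, fun _ => ⟨.refl R, .of_lift rfl fun s hs hrs => ⟨s, hs, hrs, rfl⟩⟩⟩

theorem symm {M M' : BMachine Q R} (h : EndColoursEquiv M M') : EndColoursEquiv M' M := by
  obtain ⟨β, hβ⟩ := h
  refine ⟨β.symm, fun r' => ?_⟩
  obtain ⟨ψ, hψ⟩ := hβ (β.symm r')
  rw [β.apply_symm_apply] at hψ
  exact ⟨ψ.symm, hψ.symm⟩

theorem trans {M M' M'' : BMachine Q R} (h : EndColoursEquiv M M')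
    (h' : EndColoursEquiv M' M'') : EndColoursEquiv M M'' := by
  obtain ⟨β, hβ⟩ := h
  obtain ⟨β', hβ'⟩ := h'
  refine ⟨β.trans β', fun r => ?_⟩
  obtain ⟨ψ, hψ⟩ := hβ r
  obtain ⟨ψ', hψ'⟩ := hβ' (β r)
  exact ⟨ψ.trans ψ', hψ.trans hψ' (β r).2⟩

theorem equivalence : Equivalence (EndColoursEquiv (Q := Q) (R := R)) :=
  ⟨refl, symm, trans⟩

end EndColoursEquiv

theorem Move.endColoursEquiv {b : Bool} {M M' : Machine Q R G} (h : Move b M M') :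
    EndColoursEquiv ⟨G, M⟩ ⟨G, M'⟩ := by
  obtain ⟨ψ, hψ⟩ := h.exists_ρ_eq_of_not_twoValent
  refine ⟨.refl _, fun r => ⟨ψ (G.compOf r.1), .of_lift (hψ r.1 r.2.not_twoValent) ?_⟩⟩
  intro s hs hrs
  have hcomp : G.compOf s = G.compOf r.1 := Quotient.sound (.symm _ _ hrs)
  exact ⟨s, hs, hrs, hcomp ▸ hψ s hs.not_twoValent⟩

theorem MachineIso.endColoursEquiv {M M' : BMachine Q R} (h : MachineIso M M') :
    EndColoursEquiv M M' := by
  obtain ⟨i, hρ, -⟩ := h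
  refine ⟨i.vEquiv.subtypeEquiv fun v => i.initial_iff.symm, fun r => ⟨.refl R, ?_⟩⟩
  exact .of_map i.vEquiv (hρ r.1) fun s hs hrs => ⟨i.terminal_map hs, i.conn_map hrs, hρ s⟩

theorem Machine.endColoursEquiv_destab (M : Machine Q R G) (e0 : G.E) (h0 : M.φ e0 = none)
    (hne : G.src e0 ≠ G.tgt e0) :
    EndColoursEquiv ⟨G, M⟩ ⟨G.contract e0 hne, M.destab e0 h0 hne⟩ := by
  let β : {v // G.Initial v} ≃ {v // (G.contract e0 hne).Initial v} :=
    { toFun := fun r => ⟨⟨r.1, fun h => r.2 e0 h.symm⟩, TMGraph.initial_contract_iff.mpr r.2⟩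
      invFun := fun r => ⟨r.1.1, TMGraph.initial_contract_iff.mp r.2⟩
      left_inv := fun _ => rfl
      right_inv := fun _ => rfl }
  refine ⟨β, fun r => ⟨.refl R, .of_lift rfl fun s' hs' hrs' => ?_⟩⟩
  have hrs'' : G.conn r.1 s'.1 := TMGraph.conn_of_contract_conn hrs'
  obtain ⟨t, ht, rfl | ⟨rfl, hs'⟩⟩ := TMGraph.exists_terminal_of_contract_terminal hs'
  · exact ⟨s'.1, ht, hrs'', rfl⟩
  · refine ⟨G.tgt e0, ht, .trans _ _ _ hrs'' (hs' ▸ G.conn_of_edge e0), ?_⟩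
    show M.ρ s'.1 = M.ρ (G.tgt e0)
    rw [hs', M.ρ_tgt_eq_of_φ_eq_none h0]

theorem SStep.endColoursEquiv {b : Bool} {M M' : BMachine Q R} (h : SStep b M M') :
    EndColoursEquiv M M' := by
  cases h with
  | move hm => exact hm.endColoursEquiv
  | iso hi => exact hi.endColoursEquiv
  | destab M e0 h0 hne _ => exact M.endColoursEquiv_destab e0 h0 hne

theorem StabEquivB.endColoursEquiv {b : Bool} {M M' : BMachine Q R} (h : StabEquivB b M M') :
    EndColoursEquiv M M' :=
  EndColoursEquiv.equivalence.eqvGen_iff.mp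
    (Relation.EqvGen.mono (fun _ _ => SStep.endColoursEquiv) _ _ h)

/-- The initial and terminal colour sets of a tangle machine, indexed so that
for each `i` the register `sᵢ` is the terminal register of the open process whose initial
register is `rᵢ`, are stable machine invariants: if two machines are stably equivalent,
then there is a bijection between their open processes (equivalently, their initial
registers) and rack automorphisms on connected components carrying the indexed initial and
terminal colours of one machine to those of the other. -/
theorem initial_terminal_colour_sets_stable_invariant (Q : Type) (R : RackStr Q)
    (M M' : BMachine Q R) (h : StabEquivB true M M') :
    ∃ β : {v : M.G.V // M.G.Initial v} ≃ {v : M'.G.V // M'.G.Initial v},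
      ∀ (r : {v : M.G.V // M.G.Initial v}) (s : M.G.V),
        M.G.Terminal s → M.G.conn r.1 s →
        ∀ s' : M'.G.V, M'.G.Terminal s' → M'.G.conn (β r).1 s' →
          ∃ ψ : RackAut R, M'.m.ρ (β r).1 = ψ.toEquiv (M.m.ρ r.1) ∧
            M'.m.ρ s' = ψ.toEquiv (M.m.ρ s) := by
  obtain ⟨β, hβ⟩ := h.endColoursEquiv
  refine ⟨β, fun r s hs hrs s' hs' hrs' => ?_⟩
  obtain ⟨ψ, hr, hterm⟩ := hβ r
  exact ⟨ψ, hr, hterm s s' hs hrs hs' hrs'⟩
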